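/- For every integer n ≥ 2, every weakly connected T_n-free digraph D whose underlying graph G_D is {K_{1,n}, P_n}-free has at most (R(2^{n−1}−1, n) − 1)^{n−2} vertices, and consequently cp(D) ≤ (R(2^{n−1}−1, n) − 1)^{n−2}, where R denotes the Ramsey number. -/

import Mathlib

/-! ## Basic notions for graphs and digraphs

A digraph on a vertex type `V` is given by its arc relation `E : V → V → Prop`.
Simplicity and absence of 2-cycles is expressed by the hypothesis
`∀ u v, E u v → ¬ E v u`.  The underlying graph `G_D` is `SimpleGraph.fromRel E`. -/

/-- `G` contains an induced copy of the simple graph `H`. -/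
def HasInducedCopyG {W V : Type} (H : SimpleGraph W) (G : SimpleGraph V) : Prop :=
  ∃ f : W → V, Function.Injective f ∧ ∀ a b : W, G.Adj (f a) (f b) ↔ H.Adj a b

/-- The digraph `E` contains an induced copy of the digraph `H`. -/
def DigraphHasInducedCopy {W V : Type} (H : W → W → Prop) (E : V → V → Prop) : Prop :=
  ∃ f : W → V, Function.Injective f ∧ ∀ a b : W, E (f a) (f b) ↔ H a b

/-- The star `K_{1,n}` with one center and `n` leaves. -/
def StarG (n : ℕ) : SimpleGraph (Unit ⊕ Fin n) :=
  SimpleGraph.fromRel (fun a b =>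
    match a, b with
    | Sum.inl _, Sum.inr _ => True
    | _, _ => False)

/-- The path `P_n` of order `n`. -/
def PathG (n : ℕ) : SimpleGraph (Fin n) :=
  SimpleGraph.fromRel (fun i j => i.val + 1 = j.val)

/-- The graph `K*_n`: a complete graph on the `x_i` together with pendant edges `x_i y_i`. -/
def KStarG (n : ℕ) : SimpleGraph (Fin n ⊕ Fin n) :=
  SimpleGraph.fromRel (fun a b =>
    match a, b with
    | Sum.inl i, Sum.inl j => i ≠ j
    | Sum.inl i, Sum.inr j => i = j
    | _, _ => False)

/-- The graph `F^(1)_n` on `{x₁,x₂} ∪ {yᵢ} ∪ {zᵢ}`: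
edges `x₁x₂, x₁y₁, x₁z₁` together with the two paths `y₁⋯y_n` and `z₁⋯z_n`. -/
def F1G (n : ℕ) : SimpleGraph (Fin 2 ⊕ Fin n ⊕ Fin n) :=
  SimpleGraph.fromRel (fun a b =>
    match a, b with
    | Sum.inl i, Sum.inl j => i.val = 0 ∧ j.val = 1
    | Sum.inl i, Sum.inr (Sum.inl j) => i.val = 0 ∧ j.val = 0
    | Sum.inl i, Sum.inr (Sum.inr j) => i.val = 0 ∧ j.val = 0
    | Sum.inr (Sum.inl i), Sum.inr (Sum.inl j) => i.val + 1 = j.val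
    | Sum.inr (Sum.inr i), Sum.inr (Sum.inr j) => i.val + 1 = j.val
    | _, _ => False)

/-- The single edge `y₁z₁` (used to build `F^(2)_n` and `F^(4)_n`). -/
def YZEdgeG (n : ℕ) : SimpleGraph (Fin 2 ⊕ Fin n ⊕ Fin n) :=
  SimpleGraph.fromRel (fun a b =>
    match a, b with
    | Sum.inr (Sum.inl i), Sum.inr (Sum.inr j) => i.val = 0 ∧ j.val = 0
    | _, _ => False)

/-- `F^(2)_n = F^(1)_n + y₁z₁`. -/
def F2G (n : ℕ) : SimpleGraph (Fin 2 ⊕ Fin n ⊕ Fin n) := F1G n ⊔ YZEdgeG n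

/-- The graph `F^(3)_n`: edges `x₁y₁, x₁z₁, x₂y₁, x₂z₁` together with the two paths. -/
def F3G (n : ℕ) : SimpleGraph (Fin 2 ⊕ Fin n ⊕ Fin n) :=
  SimpleGraph.fromRel (fun a b =>
    match a, b with
    | Sum.inl _, Sum.inr (Sum.inl j) => j.val = 0
    | Sum.inl _, Sum.inr (Sum.inr j) => j.val = 0
    | Sum.inr (Sum.inl i), Sum.inr (Sum.inl j) => i.val + 1 = j.val
    | Sum.inr (Sum.inr i), Sum.inr (Sum.inr j) => i.val + 1 = j.val
    | _, _ => False)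

/-- `F^(4)_n = F^(3)_n + y₁z₁`. -/
def F4G (n : ℕ) : SimpleGraph (Fin 2 ⊕ Fin n ⊕ Fin n) := F3G n ⊔ YZEdgeG n

/-- The digraph `D^(1)_n` on `{x₁} ∪ {yᵢ} ∪ {zᵢ}` with arcs
`(x₁,y₁), (z₁,x₁), (y₁,z₁)`, `(y_{i+1}, y_i)` and `(z_i, z_{i+1})`. -/
def D1Rel (n : ℕ) : (Unit ⊕ Fin n ⊕ Fin n) → (Unit ⊕ Fin n ⊕ Fin n) → Prop := fun a b =>
  match a, b with
  | Sum.inl _, Sum.inr (Sum.inl j) => j.val = 0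
  | Sum.inr (Sum.inr i), Sum.inl _ => i.val = 0
  | Sum.inr (Sum.inl i), Sum.inr (Sum.inr j) => i.val = 0 ∧ j.val = 0
  | Sum.inr (Sum.inl i), Sum.inr (Sum.inl j) => j.val + 1 = i.val
  | Sum.inr (Sum.inr i), Sum.inr (Sum.inr j) => i.val + 1 = j.val
  | _, _ => False

/-- `D^(2)_n`: obtained from `D^(1)_n` by replacing the arc `(z₁,x₁)` by `(x₁,z₁)`. -/
def D2Rel (n : ℕ) : (Unit ⊕ Fin n ⊕ Fin n) → (Unit ⊕ Fin n ⊕ Fin n) → Prop := fun a b =>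
  match a, b with
  | Sum.inl _, Sum.inr (Sum.inl j) => j.val = 0
  | Sum.inl _, Sum.inr (Sum.inr j) => j.val = 0
  | Sum.inr (Sum.inl i), Sum.inr (Sum.inr j) => i.val = 0 ∧ j.val = 0
  | Sum.inr (Sum.inl i), Sum.inr (Sum.inl j) => j.val + 1 = i.val
  | Sum.inr (Sum.inr i), Sum.inr (Sum.inr j) => i.val + 1 = j.val
  | _, _ => False

/-- `D^(3)_n`: obtained from `D^(1)_n` by replacing the arc `(x₁,y₁)` by `(y₁,x₁)`. -/
def D3Rel (n : ℕ) : (Unit ⊕ Fin n ⊕ Fin n) → (Unit ⊕ Fin n ⊕ Fin n) → Prop := fun a b =>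
  match a, b with
  | Sum.inr (Sum.inl i), Sum.inl _ => i.val = 0
  | Sum.inr (Sum.inr i), Sum.inl _ => i.val = 0
  | Sum.inr (Sum.inl i), Sum.inr (Sum.inr j) => i.val = 0 ∧ j.val = 0
  | Sum.inr (Sum.inl i), Sum.inr (Sum.inl j) => j.val + 1 = i.val
  | Sum.inr (Sum.inr i), Sum.inr (Sum.inr j) => i.val + 1 = j.val
  | _, _ => False

/-- The transitive tournament `T_n`. -/
def TRel (n : ℕ) : Fin n → Fin n → Prop := fun i j => i < j

/-- A (nonempty) directed path in the digraph `E`, recorded as its list of vertices. -/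
def IsDirPathList {V : Type} (E : V → V → Prop) (l : List V) : Prop :=
  l ≠ [] ∧ l.Nodup ∧ l.Chain' E

/-- The path cover number of the subdigraph of `E` induced by `X`:
the minimum number of directed paths of `E[X]` whose vertex sets cover `X`. -/
noncomputable def pcOn {V : Type} (E : V → V → Prop) (X : Set V) : ℕ :=
  sInf {k | ∃ P : Finset (List V), P.card = k ∧
    (∀ l ∈ P, IsDirPathList E l ∧ ∀ v ∈ l, v ∈ X) ∧
    ∀ v ∈ X, ∃ l ∈ P, v ∈ l}

/-- The path partition number of the subdigraph of `E` induced by `X`: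
the minimum number of pairwise vertex-disjoint directed paths of `E[X]`
whose vertex sets partition `X`. -/
noncomputable def ppOn {V : Type} (E : V → V → Prop) (X : Set V) : ℕ :=
  sInf {k | ∃ P : Finset (List V), P.card = k ∧
    (∀ l ∈ P, IsDirPathList E l ∧ ∀ v ∈ l, v ∈ X) ∧
    (∀ v ∈ X, ∃ l ∈ P, v ∈ l) ∧
    ∀ l ∈ P, ∀ l' ∈ P, l ≠ l' → ∀ v ∈ l, v ∉ l'}

/-- A (nonempty) path in the simple graph `G`, recorded as its list of vertices. -/
def IsPathList {V : Type} (G : SimpleGraph V) (l : List V) : Prop :=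
  l ≠ [] ∧ l.Nodup ∧ l.Chain' G.Adj

/-- The path cover number `pc(G)` of a simple graph `G`. -/
noncomputable def pcG {V : Type} (G : SimpleGraph V) : ℕ :=
  sInf {k | ∃ P : Finset (List V), P.card = k ∧
    (∀ l ∈ P, IsPathList G l) ∧ ∀ v : V, ∃ l ∈ P, v ∈ l}

/-- The path partition number `pp(G)` of a simple graph `G`. -/
noncomputable def ppG {V : Type} (G : SimpleGraph V) : ℕ :=
  sInf {k | ∃ P : Finset (List V), P.card = k ∧
    (∀ l ∈ P, IsPathList G l) ∧ (∀ v : V, ∃ l ∈ P, v ∈ l) ∧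
    ∀ l ∈ P, ∀ l' ∈ P, l ≠ l' → ∀ v ∈ l, v ∉ l'}

/-- A directed cycle in the digraph `E`, recorded as its list of vertices. -/
def IsDirCycleList {V : Type} (E : V → V → Prop) (l : List V) : Prop :=
  ∃ h : l ≠ [], 3 ≤ l.length ∧ l.Nodup ∧ l.Chain' E ∧ E (l.getLast h) (l.head h)

/-- A member of a cycle cover/partition: a directed cycle, or a weakly connected
subdigraph of order at most two. -/
def IsCyclePartMember {V : Type} (E : V → V → Prop) (l : List V) : Prop :=
  IsDirCycleList E l ∨
    (l ≠ [] ∧ l.length ≤ 2 ∧ l.Nodup ∧ l.Chain' (fun a b => E a b ∨ E b a))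

/-- The cycle partition number `cp(D)` of the digraph `E`. -/
noncomputable def cpNum {V : Type} (E : V → V → Prop) : ℕ :=
  sInf {k | ∃ P : Finset (List V), P.card = k ∧
    (∀ l ∈ P, IsCyclePartMember E l) ∧
    (∀ v : V, ∃ l ∈ P, v ∈ l) ∧
    ∀ l ∈ P, ∀ l' ∈ P, l ≠ l' → ∀ v ∈ l, v ∉ l'}

/-- `v : Fin m → V` enumerates an induced path of the simple graph `G`. -/
def IsInducedPathEmb {V : Type} (G : SimpleGraph V) {m : ℕ} (v : Fin m → V) : Prop :=
  Function.Injective v ∧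
    ∀ i j : Fin m, G.Adj (v i) (v j) ↔ (i.val + 1 = j.val ∨ j.val + 1 = i.val)

/-- `w : Fin m → V` enumerates an induced pseudo-path of the digraph `E`:
the induced subdigraph on its image has a path as underlying graph. -/
def IsInducedPsPath {V : Type} (E : V → V → Prop) {m : ℕ} (w : Fin m → V) : Prop :=
  Function.Injective w ∧
    ∀ i j : Fin m, (E (w i) (w j) ∨ E (w j) (w i)) ↔ (i.val + 1 = j.val ∨ j.val + 1 = i.val)

/-- `r(P)` for a pseudo-path enumerated by `w`: the number of (internal) vertices
having out-degree 2 or in-degree 2 in the pseudo-path. -/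
noncomputable def turnCount {V : Type} (E : V → V → Prop) {m : ℕ} (w : Fin m → V) : ℕ :=
  Set.ncard {i : Fin m | ∃ j k : Fin m, j.val + 1 = i.val ∧ i.val + 1 = k.val ∧
    ((E (w i) (w j) ∧ E (w i) (w k)) ∨ (E (w j) (w i) ∧ E (w k) (w i)))}

/-- Condition (D1): the underlying graph of `E` is `{K*_n, K_{1,n}, F^(1)_n, F^(2)_n}`-free. -/
def CondD1 {V : Type} (n : ℕ) (E : V → V → Prop) : Prop :=
  ¬ HasInducedCopyG (KStarG n) (SimpleGraph.fromRel E) ∧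
  ¬ HasInducedCopyG (StarG n) (SimpleGraph.fromRel E) ∧
  ¬ HasInducedCopyG (F1G n) (SimpleGraph.fromRel E) ∧
  ¬ HasInducedCopyG (F2G n) (SimpleGraph.fromRel E)

/-- Condition (D'1): the underlying graph of `E` is
`{K*_n, K_{1,n}, F^(1)_n, F^(2)_n, F^(3)_n, F^(4)_n}`-free. -/
def CondD1' {V : Type} (n : ℕ) (E : V → V → Prop) : Prop :=
  CondD1 n E ∧
  ¬ HasInducedCopyG (F3G n) (SimpleGraph.fromRel E) ∧
  ¬ HasInducedCopyG (F4G n) (SimpleGraph.fromRel E)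

/-- Condition (D2): `E` is `{D^(1)_n, D^(2)_n, D^(3)_n}`-free. -/
def CondD2 {V : Type} (n : ℕ) (E : V → V → Prop) : Prop :=
  ¬ DigraphHasInducedCopy (D1Rel n) E ∧
  ¬ DigraphHasInducedCopy (D2Rel n) E ∧
  ¬ DigraphHasInducedCopy (D3Rel n) E

/-- Condition (D3): `r(P) ≤ n` for every induced pseudo-path `P` of `E`. -/
def CondD3 {V : Type} (n : ℕ) (E : V → V → Prop) : Prop :=
  ∀ (m : ℕ) (w : Fin m → V), IsInducedPsPath E w → turnCount E w ≤ n

/-- The Ramsey number `R(a, b)`: the least `R` such that every graph on at least `R`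
vertices contains a clique of size `a` or an independent set of size `b`. -/
noncomputable def ramseyNumber (a b : ℕ) : ℕ :=
  sInf {R | ∀ m : ℕ, R ≤ m → ∀ G : SimpleGraph (Fin m),
    (∃ s : Finset (Fin m), G.IsNClique a s) ∨ (∃ s : Finset (Fin m), Gᶜ.IsNClique b s)}

/-- The independence number of the subgraph of `G` induced by `X`. -/
noncomputable def indepNumOn {V : Type} (G : SimpleGraph V) (X : Set V) : ℕ :=
  sSup {k | ∃ s : Finset V, ↑s ⊆ X ∧ s.card = k ∧ ∀ a ∈ s, ∀ b ∈ s, a ≠ b → ¬ G.Adj a b}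

/-- The independence number `α(G)`. -/
noncomputable def indepNum {V : Type} (G : SimpleGraph V) : ℕ := indepNumOn G Set.univ

/-- The neighborhood `N_G(X)` of a set of vertices. -/
def nbhd {V : Type} (G : SimpleGraph V) (X : Set V) : Set V :=
  {v | v ∉ X ∧ ∃ x ∈ X, G.Adj v x}

/-!
Let `G` be the underlying graph and `R = R(2^(n-1) - 1, n)`. Every vertex `w` has fewer than `R`
neighbours: a clique of size `2^(n-1) - 1` in `N(w)` together with `w` spans a tournament on
`2^(n-1)` vertices, which contains a transitive `T_n`, and an independent `n`-set in `N(w)` spans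
an induced `K_{1,n}`. A geodesic with `n - 1` edges would be an induced `P_n`, so `G` has
diameter at most `d = n - 2`. Counting the distance layers around a vertex, each layer after the
first is at most `R - 2` times the previous one; for `d ≥ 2` this gives `|V| ≤ (R - 1)^d` once
the second layer is shown to miss one vertex, which holds because a vertex with at least `n`
neighbours has two adjacent ones. For `n = 3` the graph is complete, hence a tournament with fewer
than `4 ≤ R - 1` vertices. Finally `cp(D) ≤ |V|` via singletons.
-/

open Finset

-- `x i` stands for the size of the `i`-th distance layer; at `d = 2` the count
-- `1 + Δ + Δ (Δ - 1)` exceeds `Δ ^ 2` by one, which the strict bound on `x 2` absorbs.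
theorem sum_range_le_pow_of_growth {x : ℕ → ℕ} {Δ d : ℕ} (h0 : x 0 ≤ 1) (h1 : x 1 ≤ Δ)
    (h2 : x 2 < Δ * (Δ - 1)) (hstep : ∀ i, x (i + 3) ≤ (Δ - 1) * x (i + 2)) (hd : 2 ≤ d) :
    ∑ i ∈ range (d + 1), x i ≤ Δ ^ d := by
  obtain ⟨D, rfl⟩ : ∃ D, Δ = D + 1 := ⟨Δ - 1, by cases Δ <;> simp_all⟩
  simp only [Nat.add_sub_cancel] at h2 hstep
  suffices h : ∀ k, ∑ i ∈ range (k + 3), x i ≤ (D + 1) ^ (k + 2) ∧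
      x (k + 2) ≤ D * (D + 1) ^ (k + 1) by
    obtain ⟨k, rfl⟩ : ∃ k, d = k + 2 := ⟨d - 2, by omega⟩
    exact (h k).1
  intro k
  induction k with
  | zero =>
    simp only [sum_range_succ, sum_range_zero, zero_add, pow_one]
    constructor <;> nlinarith
  | succ k ih =>
    have hx : x (k + 3) ≤ D * (D + 1) ^ (k + 2) := calc
      x (k + 3) ≤ D * x (k + 2) := hstep k
      _ ≤ D * (D * (D + 1) ^ (k + 1)) := Nat.mul_le_mul_left _ ih.2
      _ ≤ D * ((D + 1) * (D + 1) ^ (k + 1)) :=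
        Nat.mul_le_mul_left _ (Nat.mul_le_mul_right _ (by omega))
      _ = D * (D + 1) ^ (k + 2) := by ring
    refine ⟨?_, hx⟩
    calc ∑ i ∈ range (k + 1 + 3), x i
        = ∑ i ∈ range (k + 3), x i + x (k + 3) := sum_range_succ _ _
      _ ≤ (D + 1) ^ (k + 2) + D * (D + 1) ^ (k + 2) := add_le_add ih.1 hx
      _ = (D + 1) ^ (k + 1 + 2) := by ring

namespace SimpleGraph

section Ramsey

variable {V : Type}

theorem exists_isNClique_or_isNClique_compl (a b : ℕ) :
    ∃ R : ℕ, ∀ {V : Type} (G : SimpleGraph V) (s : Finset V), R ≤ #s →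
      (∃ t ⊆ s, G.IsNClique a t) ∨ ∃ t ⊆ s, Gᶜ.IsNClique b t := by
  classical
  induction a generalizing b with
  | zero => exact ⟨0, fun _ _ _ => Or.inl ⟨∅, empty_subset _, by simp⟩⟩
  | succ a iha =>
    induction b with
    | zero => exact ⟨0, fun _ _ _ => Or.inr ⟨∅, empty_subset _, by simp⟩⟩
    | succ b ihb =>
      obtain ⟨R₁, h₁⟩ := iha (b + 1)
      obtain ⟨R₂, h₂⟩ := ihb
      refine ⟨R₁ + R₂ + 1, fun {W} G s hs => ?_⟩
      obtain ⟨v, hv⟩ : s.Nonempty := card_pos.mp (by omega)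
      have hsplit := card_filter_add_card_filter_not (s := s.erase v) (fun u => G.Adj v u)
      rw [card_erase_of_mem hv] at hsplit
      have hsub : ∀ p : W → Prop, ∀ [DecidablePred p], {u ∈ s.erase v | p u} ⊆ s :=
        fun p _ => (filter_subset _ _).trans (erase_subset _ _)
      by_cases hR₁ : R₁ ≤ #{u ∈ s.erase v | G.Adj v u}
      · rcases h₁ G _ hR₁ with ⟨t, hts, ht⟩ | ⟨t, hts, ht⟩
        · exact Or.inl ⟨insert v t, insert_subset hv (hts.trans (hsub _)),
            ht.insert fun u hu => (mem_filter.mp (hts hu)).2⟩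
        · exact Or.inr ⟨t, hts.trans (hsub _), ht⟩
      · rcases h₂ G {u ∈ s.erase v | ¬G.Adj v u} (by omega) with
          ⟨t, hts, ht⟩ | ⟨t, hts, ht⟩
        · exact Or.inl ⟨t, hts.trans (hsub _), ht⟩
        · refine Or.inr ⟨insert v t, insert_subset hv (hts.trans (hsub _)),
            ht.insert fun u hu => ?_⟩
          obtain ⟨hu, hvu⟩ := mem_filter.mp (hts hu)
          exact (compl_adj G v u).mpr ⟨(ne_of_mem_erase hu).symm, hvu⟩

theorem ramseyNumber_spec (a b : ℕ) :
    ∀ m, ramseyNumber a b ≤ m → ∀ G : SimpleGraph (Fin m),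
      (∃ s, G.IsNClique a s) ∨ ∃ s, Gᶜ.IsNClique b s := by
  refine Nat.sInf_mem (s := {R | ∀ m, R ≤ m → ∀ G : SimpleGraph (Fin m), _}) ?_
  obtain ⟨R, hR⟩ := exists_isNClique_or_isNClique_compl a b
  refine ⟨R, fun m hm G => ?_⟩
  rcases hR G univ (by simpa using hm) with ⟨t, -, ht⟩ | ⟨t, -, ht⟩
  exacts [Or.inl ⟨t, ht⟩, Or.inr ⟨t, ht⟩]

theorem lt_ramseyNumber {m a b : ℕ} (G : SimpleGraph (Fin m)) (ha : G.CliqueFree a)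
    (hb : Gᶜ.CliqueFree b) : m < ramseyNumber a b := by
  by_contra! h
  rcases ramseyNumber_spec a b m h G with ⟨s, hs⟩ | ⟨s, hs⟩
  exacts [ha s hs, hb s hs]

theorem compl_comap {W : Type} (G : SimpleGraph W) (f : V ↪ W) :
    (G.comap f)ᶜ = Gᶜ.comap f := by
  ext x y
  simp [f.injective.ne_iff]

theorem exists_isNClique_or_of_ramseyNumber_le {a b : ℕ} (G : SimpleGraph V) (s : Finset V)
    (hs : ramseyNumber a b ≤ #s) :
    (∃ t ⊆ s, G.IsNClique a t) ∨ ∃ t ⊆ s, Gᶜ.IsNClique b t := by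
  let f : Fin #s ↪ V := s.equivFin.symm.toEmbedding.trans (Function.Embedding.subtype _)
  have hf : ∀ t : Finset (Fin #s), t.map f ⊆ s := fun t x hx => by
    obtain ⟨i, -, rfl⟩ := mem_map.mp hx
    exact (s.equivFin.symm i).2
  rcases ramseyNumber_spec a b _ hs (G.comap f) with ⟨t, ht⟩ | ⟨t, ht⟩
  · exact Or.inl ⟨t.map f, hf t, ht.map.mono (map_comap_le f G)⟩
  · rw [compl_comap] at ht
    exact Or.inr ⟨t.map f, hf t, ht.map.mono (map_comap_le f Gᶜ)⟩

theorem cliqueFree_card_of_ne_top [Fintype V] {G : SimpleGraph V} (hG : G ≠ ⊤) :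
    G.CliqueFree (Fintype.card V) := fun s hs =>
  hG (isClique_univ.mp (by simpa [eq_univ_of_card s hs.card_eq] using hs.isClique))

theorem lt_ramseyNumber_two_pow {n : ℕ} (hn : 3 ≤ n) :
    n < ramseyNumber (2 ^ (n - 1) - 1) n := by
  have hpow : n + 1 ≤ 2 ^ (n - 1) := by
    have := Nat.lt_two_pow_self (n := n - 2)
    rw [show n - 1 = n - 2 + 1 by omega, pow_succ]
    omega
  have h01 : (pathGraph n).Adj ⟨0, by omega⟩ ⟨1, by omega⟩ := by simp [pathGraph_adj]
  have h02 : ¬(pathGraph n).Adj ⟨0, by omega⟩ ⟨2, by omega⟩ := by simp [pathGraph_adj]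
  refine lt_ramseyNumber (pathGraph n) ((cliqueFree_card_of_ne_top ?_).mono ?_) ?_
  · exact fun h => h02 (h ▸ by simp)
  · rw [Fintype.card_fin]; omega
  · simpa using cliqueFree_card_of_ne_top (G := (pathGraph n)ᶜ) fun h => by
      simp [compl_eq_top.mp h] at h01

end Ramsey

section InducedSubgraphs

variable {V : Type} {G : SimpleGraph V} {n : ℕ}

theorem hasInducedCopyG_starG {w : V} {s : Finset V} (hw : ∀ x ∈ s, G.Adj w x)
    (hs : Gᶜ.IsNClique n s) : HasInducedCopyG (StarG n) G := by
  let g : Fin n ↪ V := (finCongr hs.card_eq.symm).toEmbedding.trans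
    (s.equivFin.symm.toEmbedding.trans (Function.Embedding.subtype _))
  have hg : ∀ i, g i ∈ s := fun i => (s.equivFin.symm _).2
  have hwg : ∀ i, w ≠ g i := fun i h => G.irrefl (h ▸ hw _ (hg i))
  have hgg : ∀ i j, ¬G.Adj (g i) (g j) := fun i j h => by
    obtain rfl | hij := eq_or_ne i j
    · exact G.irrefl h
    · exact ((compl_adj _ _ _).mp (hs.isClique (hg i) (hg j) (g.injective.ne hij))).2 h
  refine ⟨Sum.elim (fun _ => w) g, ?_, ?_⟩
  · rintro (⟨⟩ | i) (⟨⟩ | j) h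
    · rfl
    · exact absurd h (hwg j)
    · exact absurd h.symm (hwg i)
    · exact congrArg Sum.inr (g.injective h)
  · rintro (⟨⟩ | i) (⟨⟩ | j) <;>
      simp [StarG, fromRel_adj, hw _ (hg _), (hw _ (hg _)).symm, hgg]

theorem exists_adj_of_starG_free (hStar : ¬HasInducedCopyG (StarG n) G) {w : V} {s : Finset V}
    (hw : ∀ x ∈ s, G.Adj w x) (hs : n ≤ #s) : ∃ a ∈ s, ∃ b ∈ s, G.Adj a b := by
  obtain ⟨t, hts, ht⟩ := exists_subset_card_eq hs
  by_contra! h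
  refine hStar (hasInducedCopyG_starG (fun x hx => hw x (hts hx)) ⟨fun x hx y hy hxy => ?_, ht⟩)
  exact (compl_adj _ _ _).mpr ⟨hxy, h x (hts hx) y (hts hy)⟩

theorem Walk.dist_getVert_of_length_eq_dist {u v : V} {p : G.Walk u v}
    (hp : p.length = G.dist u v) {i : ℕ} (hi : i ≤ p.length) : G.dist u (p.getVert i) = i := by
  rw [← length_eq_dist_of_subwalk hp (p.isSubwalk_take i), Walk.take_length]
  omega

theorem dist_le_of_pathG_free (hconn : G.Connected)
    (hPath : ¬HasInducedCopyG (PathG n) G) (u v : V) : G.dist u v ≤ n - 2 := by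
  by_contra! h
  obtain ⟨p, hp⟩ := hconn.exists_walk_length_eq_dist u v
  have hd : ∀ i : Fin n, G.dist u (p.getVert i) = i := fun i =>
    p.dist_getVert_of_length_eq_dist hp (by omega)
  refine hPath ⟨fun i => p.getVert i,
    fun i j h => Fin.ext (by rw [← hd i, ← hd j]; exact congrArg _ h), fun i j => ?_⟩
  simp only [PathG, fromRel_adj, ne_eq, Fin.ext_iff]
  constructor
  · intro hadj
    have hij : (i : ℕ) ≠ j := fun hij => G.irrefl (Fin.ext hij ▸ hadj)
    have := hadj.diff_dist_adj (u := u)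
    rw [hd, hd] at this
    exact ⟨hij, by omega⟩
  · rintro ⟨-, h | h⟩
    · simpa [h] using p.adj_getVert_succ (i := i) (by have := j.isLt; omega)
    · simpa [h] using (p.adj_getVert_succ (i := j) (by have := i.isLt; omega)).symm

theorem exists_adj_dist_eq_of_dist_eq_succ (hconn : G.Connected) {v u : V} {i : ℕ}
    (h : G.dist v u = i + 1) : ∃ w, G.Adj w u ∧ G.dist v w = i := by
  obtain ⟨p, hp⟩ := hconn.exists_walk_length_eq_dist v u
  refine ⟨p.getVert i, ?_, p.dist_getVert_of_length_eq_dist hp (by omega)⟩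
  simpa [show i + 1 = p.length by omega] using p.adj_getVert_succ (i := i) (by omega)

theorem Connected.eq_top_of_dist_le_one (hconn : G.Connected) (h : ∀ u v, G.dist u v ≤ 1) :
    G = ⊤ := by
  ext u v
  exact ⟨G.ne_of_adj, fun huv =>
    dist_eq_one_iff_adj.mp (le_antisymm (h u v) (hconn.pos_dist_of_ne huv))⟩

end InducedSubgraphs

section DistLayer

variable {V : Type} [Fintype V] {G : SimpleGraph V}

-- Unreachable vertices have `G.dist v u = 0` and land in layer `0`; hence the connectivity
-- hypotheses below.
noncomputable def distLayer (G : SimpleGraph V) (v : V) (i : ℕ) : Finset V := {u | G.dist v u = i}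

@[simp]
theorem mem_distLayer {v u : V} {i : ℕ} : u ∈ G.distLayer v i ↔ G.dist v u = i := by
  simp [distLayer]

theorem card_eq_sum_card_distLayer {d : ℕ} (v : V) (hd : ∀ u, G.dist v u ≤ d) :
    Fintype.card V = ∑ i ∈ range (d + 1), #(G.distLayer v i) :=
  (card_univ).symm.trans
    (card_eq_sum_card_fiberwise fun u _ => mem_range.mpr (Nat.lt_succ_of_le (hd u)))

theorem distLayer_zero (hconn : G.Connected) (v : V) : G.distLayer v 0 = {v} := by
  ext u
  simp [hconn.dist_eq_zero_iff, eq_comm]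

variable [DecidableRel G.Adj]

theorem distLayer_one (v : V) : G.distLayer v 1 = G.neighborFinset v := by
  ext u
  simp [dist_eq_one_iff_adj]

variable [DecidableEq V]

theorem card_distLayer_succ_le_sum (hconn : G.Connected) (v : V) (i : ℕ) :
    #(G.distLayer v (i + 1)) ≤
      ∑ w ∈ G.distLayer v i, #(G.neighborFinset w ∩ G.distLayer v (i + 1)) := by
  refine (card_le_card fun u hu => ?_).trans card_biUnion_le
  obtain ⟨w, hwu, hw⟩ := exists_adj_dist_eq_of_dist_eq_succ hconn (mem_distLayer.mp hu)
  exact mem_biUnion.mpr ⟨w, mem_distLayer.mpr hw, mem_inter.mpr ⟨by simpa using hwu, hu⟩⟩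

theorem card_neighborFinset_inter_distLayer_lt_degree (hconn : G.Connected) {v w : V} {i : ℕ}
    (hw : G.dist v w = i + 1) : #(G.neighborFinset w ∩ G.distLayer v (i + 2)) < G.degree w := by
  obtain ⟨w', hw'w, hw'⟩ := exists_adj_dist_eq_of_dist_eq_succ hconn hw
  rw [← card_neighborFinset_eq_degree]
  refine card_lt_card ((ssubset_iff_of_subset inter_subset_left).mpr
    ⟨w', by simpa using hw'w.symm, fun h => ?_⟩)
  have := mem_distLayer.mp (mem_inter.mp h).2
  omega

theorem card_neighborFinset_inter_distLayer_two_add_two_le {v a b : V} (hva : G.Adj v a)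
    (hvb : G.Adj v b) (hab : G.Adj a b) :
    #(G.neighborFinset a ∩ G.distLayer v 2) + 2 ≤ G.degree a := by
  have hsub : G.neighborFinset a ∩ G.distLayer v 2 ⊆ ((G.neighborFinset a).erase v).erase b :=
    fun x hx => by
      obtain ⟨hxa, hx2⟩ := mem_inter.mp hx
      have hx2 := mem_distLayer.mp hx2
      refine mem_erase.mpr ⟨?_, mem_erase.mpr ⟨?_, hxa⟩⟩
      · rintro rfl
        simp [dist_eq_one_iff_adj.mpr hvb] at hx2
      · rintro rfl
        simp at hx2
  have hb := card_erase_add_one (s := (G.neighborFinset a).erase v) (a := b)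
    (by simpa [hvb.ne.symm] using hab)
  have hv := card_erase_add_one (s := G.neighborFinset a) (a := v) (by simpa using hva.symm)
  have := card_le_card hsub
  rw [card_neighborFinset_eq_degree] at hv
  omega

variable {Δ : ℕ}

theorem card_distLayer_succ_succ_le (hconn : G.Connected) (hdeg : ∀ w, G.degree w ≤ Δ)
    (v : V) (i : ℕ) : #(G.distLayer v (i + 2)) ≤ (Δ - 1) * #(G.distLayer v (i + 1)) :=
  calc #(G.distLayer v (i + 2))
      ≤ ∑ w ∈ G.distLayer v (i + 1), #(G.neighborFinset w ∩ G.distLayer v (i + 2)) :=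
        card_distLayer_succ_le_sum hconn v (i + 1)
    _ ≤ ∑ _w ∈ G.distLayer v (i + 1), (Δ - 1) := sum_le_sum fun w hw => by
        have := card_neighborFinset_inter_distLayer_lt_degree hconn (mem_distLayer.mp hw)
        have := hdeg w
        omega
    _ = (Δ - 1) * #(G.distLayer v (i + 1)) := by rw [sum_const, smul_eq_mul, mul_comm]

theorem card_distLayer_two_lt (hconn : G.Connected) (hdeg : ∀ w, G.degree w ≤ Δ) {n : ℕ}
    (hStar : ¬HasInducedCopyG (StarG n) G) (hn : 2 ≤ n) (hnΔ : n ≤ Δ) (v : V) :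
    #(G.distLayer v 2) < Δ * (Δ - 1) := by
  obtain ⟨D, rfl⟩ : ∃ D, Δ = D + 2 := ⟨Δ - 2, by omega⟩
  rw [show D + 2 - 1 = D + 1 by omega]
  have hL1 : #(G.distLayer v 1) ≤ D + 2 := by
    rw [distLayer_one, card_neighborFinset_eq_degree]
    exact hdeg v
  by_cases hsmall : #(G.distLayer v 1) < n
  · calc #(G.distLayer v 2) ≤ (D + 2 - 1) * #(G.distLayer v 1) :=
          card_distLayer_succ_succ_le hconn hdeg v 0
      _ ≤ (D + 1) * (D + 1) := Nat.mul_le_mul (by omega) (by omega)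
      _ < (D + 2) * (D + 1) := by nlinarith
  -- With at least `n` neighbours, `v` has two adjacent ones `a`, `b` (no induced star), and `b`
  -- is a neighbour of `a` outside the second layer.
  rw [not_lt] at hsmall
  obtain ⟨a, ha, b, hb, hab⟩ :=
    exists_adj_of_starG_free hStar (w := v) (fun x hx => by simpa [distLayer_one] using hx) hsmall
  have ha2 : #(G.neighborFinset a ∩ G.distLayer v 2) ≤ D := by
    have := card_neighborFinset_inter_distLayer_two_add_two_le
      (by simpa [distLayer_one] using ha) (by simpa [distLayer_one] using hb) hab
    have := hdeg a
    omega
  calc #(G.distLayer v 2)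
      ≤ ∑ w ∈ G.distLayer v 1, #(G.neighborFinset w ∩ G.distLayer v 2) :=
        card_distLayer_succ_le_sum hconn v 1
    _ = #(G.neighborFinset a ∩ G.distLayer v 2) +
          ∑ w ∈ (G.distLayer v 1).erase a, #(G.neighborFinset w ∩ G.distLayer v 2) :=
        (add_sum_erase _ _ ha).symm
    _ ≤ D + ∑ _w ∈ (G.distLayer v 1).erase a, (D + 1) :=
      add_le_add ha2 (sum_le_sum fun w hw =>
        Nat.lt_succ_iff.mp ((card_neighborFinset_inter_distLayer_lt_degree hconn
          (mem_distLayer.mp (mem_of_mem_erase hw))).trans_le (hdeg w)))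
    _ = D + (#(G.distLayer v 1) - 1) * (D + 1) := by
      rw [sum_const, card_erase_of_mem ha, smul_eq_mul]
    _ ≤ D + (D + 1) * (D + 1) := by gcongr; omega
    _ < (D + 2) * (D + 1) := by nlinarith

theorem card_le_pow_of_starG_free (hconn : G.Connected) (hdeg : ∀ w, G.degree w ≤ Δ)
    {n d : ℕ} (hStar : ¬HasInducedCopyG (StarG n) G) (hn : 2 ≤ n) (hnΔ : n ≤ Δ)
    (hdist : ∀ u v, G.dist u v ≤ d) (hd : 2 ≤ d) : Fintype.card V ≤ Δ ^ d := by
  obtain ⟨v⟩ := hconn.nonempty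
  rw [card_eq_sum_card_distLayer v (hdist v)]
  refine sum_range_le_pow_of_growth ?_ ?_ (card_distLayer_two_lt hconn hdeg hStar hn hnΔ v)
    (fun i => card_distLayer_succ_succ_le hconn hdeg v (i + 1)) hd
  · simp [distLayer_zero hconn]
  · rw [distLayer_one, card_neighborFinset_eq_degree]
    exact hdeg v

end DistLayer

end SimpleGraph

section Digraph

variable {V : Type} {E : V → V → Prop}

theorem exists_pairwise_of_two_pow_le_card (m : ℕ) {s : Finset V}
    (hs : 2 ^ m ≤ #s) (hcomp : (SimpleGraph.fromRel E).IsClique (s : Set V)) :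
    ∃ l : List V, l.length = m + 1 ∧ (∀ x ∈ l, x ∈ s) ∧ l.Pairwise E := by
  classical
  induction m generalizing s with
  | zero =>
    obtain ⟨x, hx⟩ := card_pos.mp (by simpa using hs)
    exact ⟨[x], rfl, by simpa using hx, List.pairwise_singleton _ _⟩
  | succ m ih =>
    obtain ⟨x, hx⟩ := card_pos.mp (hs.trans_lt' (Nat.two_pow_pos _))
    have hsplit := card_filter_add_card_filter_not (s := s.erase x) (fun y => E x y)
    rw [card_erase_of_mem hx] at hsplit
    have hsub : ∀ p : V → Prop, ∀ [DecidablePred p], {y ∈ s.erase x | p y} ⊆ s :=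
      fun p _ => (filter_subset _ _).trans (erase_subset _ _)
    by_cases hout : 2 ^ m ≤ #{y ∈ s.erase x | E x y}
    · obtain ⟨l, hlen, hls, hl⟩ := ih hout (hcomp.subset (by exact_mod_cast hsub _))
      refine ⟨x :: l, by simp [hlen], ?_, List.pairwise_cons.mpr ⟨fun y hy => ?_, hl⟩⟩
      · simpa [hx] using fun y hy => hsub _ (hls y hy)
      · exact (mem_filter.mp (hls y hy)).2
    · have hin : 2 ^ m ≤ #{y ∈ s.erase x | ¬E x y} := by rw [pow_succ] at hs; omega
      obtain ⟨l, hlen, hls, hl⟩ := ih hin (hcomp.subset (by exact_mod_cast hsub _))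
      refine ⟨l ++ [x], by simp [hlen], ?_, List.pairwise_append.mpr ⟨hl, by simp, ?_⟩⟩
      · simpa [hx, or_imp, forall_and] using fun y hy => hsub _ (hls y hy)
      · intro y hy z hz
        obtain ⟨hy, hxy⟩ := mem_filter.mp (hls y hy)
        obtain rfl := List.mem_singleton.mp hz
        have := hcomp (mem_of_mem_erase hy) hx (ne_of_mem_erase hy)
        rw [SimpleGraph.fromRel_adj] at this
        tauto

theorem digraphHasInducedCopy_TRel_of_pairwise (hE : ∀ u v, E u v → ¬E v u) {l : List V}
    (hl : l.Pairwise E) : DigraphHasInducedCopy (TRel l.length) E := by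
  have hlt : ∀ i j : Fin l.length, i < j → E (l.get i) (l.get j) := List.pairwise_iff_get.mp hl
  have hnodup : l.Nodup := hl.imp fun h hab => by subst hab; exact hE _ _ h h
  refine ⟨l.get, List.nodup_iff_injective_get.mp hnodup,
    fun i j => ⟨fun h => ?_, hlt i j⟩⟩
  rcases lt_trichotomy i j with hij | rfl | hij
  exacts [hij, absurd h (hE _ _ h), absurd (hlt j i hij) (hE _ _ h)]

theorem digraphHasInducedCopy_TRel_of_two_pow_le_card (hE : ∀ u v, E u v → ¬E v u) {n : ℕ}
    {s : Finset V} (hs : 2 ^ (n - 1) ≤ #s)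
    (hcomp : (SimpleGraph.fromRel E).IsClique (s : Set V)) :
    DigraphHasInducedCopy (TRel n) E := by
  rcases n with _ | n
  · exact ⟨Fin.elim0, fun i => i.elim0, fun i => i.elim0⟩
  · obtain ⟨l, hlen, -, hl⟩ := exists_pairwise_of_two_pow_le_card n hs hcomp
    exact hlen ▸ digraphHasInducedCopy_TRel_of_pairwise hE hl

theorem card_lt_two_pow_of_fromRel_eq_top [Fintype V] {n : ℕ} (hE : ∀ u v, E u v → ¬E v u)
    (hT : ¬DigraphHasInducedCopy (TRel n) E)
    (htop : SimpleGraph.fromRel E = ⊤) : Fintype.card V < 2 ^ (n - 1) := by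
  by_contra! h
  exact hT (digraphHasInducedCopy_TRel_of_two_pow_le_card hE (s := univ) (by simpa using h)
    (htop ▸ SimpleGraph.IsClique.top _))

theorem degree_fromRel_lt_ramseyNumber [Fintype V]
    [DecidableRel (SimpleGraph.fromRel E).Adj] {n : ℕ} (hE : ∀ u v, E u v → ¬E v u)
    (hT : ¬DigraphHasInducedCopy (TRel n) E)
    (hStar : ¬HasInducedCopyG (StarG n) (SimpleGraph.fromRel E)) (w : V) :
    (SimpleGraph.fromRel E).degree w < ramseyNumber (2 ^ (n - 1) - 1) n := by
  classical
  by_contra! h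
  rw [← SimpleGraph.card_neighborFinset_eq_degree] at h
  have hw : ∀ t ⊆ (SimpleGraph.fromRel E).neighborFinset w, ∀ x ∈ t,
      (SimpleGraph.fromRel E).Adj w x :=
    fun t hts x hx => (SimpleGraph.mem_neighborFinset _ _ _).mp (hts hx)
  rcases SimpleGraph.exists_isNClique_or_of_ramseyNumber_le _ _ h with
    ⟨t, hts, ht⟩ | ⟨t, hts, ht⟩
  · have hwt := ht.insert (hw t hts)
    refine hT (digraphHasInducedCopy_TRel_of_two_pow_le_card hE ?_ hwt.isClique)
    have := Nat.one_le_two_pow (n := n - 1)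
    rw [hwt.card_eq]
    omega
  · exact hStar (SimpleGraph.hasInducedCopyG_starG (hw t hts) ht)

theorem cpNum_le_card [Fintype V] (E : V → V → Prop) : cpNum E ≤ Fintype.card V := by
  classical
  refine Nat.sInf_le ⟨univ.map ⟨fun v => [v], List.singleton_injective⟩,
    by simp, ?_, fun v => ⟨[v], by simp, by simp⟩, ?_⟩
  · intro l hl
    obtain ⟨v, -, rfl⟩ := mem_map.mp hl
    exact Or.inr
      ⟨List.cons_ne_nil _ _, by simp, List.nodup_singleton v, List.isChain_singleton v⟩
  · intro l hl l' hl' hne v hv hv'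
    obtain ⟨a, -, rfl⟩ := mem_map.mp hl
    obtain ⟨b, -, rfl⟩ := mem_map.mp hl'
    simp_all

end Digraph

/-- Every weakly connected `T_n`-free digraph `D` (`n ≥ 2`) whose
underlying graph is `{K_{1,n}, P_n}`-free has at most `(R(2^{n−1}−1, n) − 1)^{n−2}`
vertices, and consequently `cp(D) ≤ (R(2^{n−1}−1, n) − 1)^{n−2}`. -/
theorem card_and_cp_le_of_Tn_free (n : ℕ) (hn : 2 ≤ n)
    (V : Type) [Fintype V] (E : V → V → Prop)
    (hE : ∀ u v : V, E u v → ¬ E v u)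
    (hconn : (SimpleGraph.fromRel E).Connected)
    (hT : ¬ DigraphHasInducedCopy (TRel n) E)
    (hStar : ¬ HasInducedCopyG (StarG n) (SimpleGraph.fromRel E))
    (hPath : ¬ HasInducedCopyG (PathG n) (SimpleGraph.fromRel E)) :
    Fintype.card V ≤ (ramseyNumber (2 ^ (n - 1) - 1) n - 1) ^ (n - 2) ∧
    cpNum E ≤ (ramseyNumber (2 ^ (n - 1) - 1) n - 1) ^ (n - 2) := by
  classical
  have hdeg : ∀ w, (SimpleGraph.fromRel E).degree w ≤ ramseyNumber (2 ^ (n - 1) - 1) n - 1 :=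
    fun w => Nat.le_sub_one_of_lt (degree_fromRel_lt_ramseyNumber hE hT hStar w)
  have hdist := SimpleGraph.dist_le_of_pathG_free hconn hPath
  suffices h : Fintype.card V ≤ (ramseyNumber (2 ^ (n - 1) - 1) n - 1) ^ (n - 2) from
    ⟨h, (cpNum_le_card E).trans h⟩
  obtain rfl | rfl | hn4 : n = 2 ∨ n = 3 ∨ 4 ≤ n := by omega
  · exact Fintype.card_le_one_iff.mpr fun u v =>
      hconn.dist_eq_zero_iff.mp (Nat.le_zero.mp (hdist u v))
  · have hcard := card_lt_two_pow_of_fromRel_eq_top hE hT (hconn.eq_top_of_dist_le_one hdist)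
    have hR := SimpleGraph.lt_ramseyNumber_two_pow le_rfl
    norm_num at hcard hR ⊢
    omega
  · exact SimpleGraph.card_le_pow_of_starG_free hconn hdeg hStar hn
      (Nat.le_sub_one_of_lt (SimpleGraph.lt_ramseyNumber_two_pow (by omega))) hdist (by omega)
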